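/- arXiv:1903.09619 — 2 statements merged into one kernel-verified Lean document; each statement's English description precedes it below -/
import Mathlib

section
/- For every natural number n ≥ 2, the height function satisfies the inequalities log(n/2)/log 3 + 1 ≤ H(n) ≤ log n/log 2 + 1, where log denotes the natural logarithm (on the real numbers). -/
/-- The height function: H(1) = 0 and H(n) = H(φ(n)) + 1 for n ≥ 2. -/
def H : ℕ → ℕ
  | 0 => 0
  | 1 => 0
  | n + 2 => H (Nat.totient (n + 2)) + 1
  decreasing_by exact Nat.totient_lt _ (by omega)

/-- The sum-of-heights function S(n) = ∑_{k=1}^n H(k). -/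
def S (n : ℕ) : ℕ := ∑ k ∈ Finset.Icc 1 n, H k

/-!
The upper bound holds because `φ n` is even for `n > 2` and `2 * φ n ≤ n` for even `n`, so after
the first step every application of `φ` at least halves the argument.

For the lower bound, weigh `n = 2 ^ k * m` (`m` odd) as `w n = 3 ^ k * m = n * (3 / 2) ^ k`.
The weight is multiplicative, `w (p - 1) ≥ p` for every odd prime `p`, and therefore
`n ≤ w (φ n)` for odd `n`, while `w n ≤ 3 * w (φ n)` in general. Induction gives
`w n ≤ 3 ^ H n`, hence `3 / 2 * n ≤ 3 ^ H n`.
-/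

open scoped Nat

lemma H_eq_H_totient_add_one {n : ℕ} (hn : 2 ≤ n) : H n = H (φ n) + 1 := by
  obtain ⟨m, rfl⟩ := Nat.exists_eq_add_of_le' hn
  rw [H]

lemma H_one : H 1 = 0 := by
  rw [H]

lemma H_two : H 2 = 1 := by
  rw [H_eq_H_totient_add_one le_rfl, Nat.totient_two, H_one]

lemma two_le_totient {n : ℕ} (hn : 2 < n) : 2 ≤ φ n := by
  obtain ⟨k, hk⟩ := Nat.totient_even hn
  have := Nat.totient_pos.mpr (show 0 < n by omega)
  omega

lemma totient_two_pow_succ_mul_of_odd {m : ℕ} (hm : Odd m) (k : ℕ) :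
    φ (2 ^ (k + 1) * m) = 2 ^ k * φ m := by
  rw [Nat.totient_mul ((Nat.coprime_two_left.mpr hm).pow_left _),
    Nat.totient_prime_pow_succ Nat.prime_two, Nat.add_one_sub_one, mul_one]

lemma exists_eq_two_pow_succ_mul_odd_of_even {n : ℕ} (hn : Even n) (h0 : n ≠ 0) :
    ∃ k m, Odd m ∧ n = 2 ^ (k + 1) * m := by
  obtain ⟨_ | k, m, hm, rfl⟩ := Nat.exists_eq_two_pow_mul_odd h0
  · exact absurd hn (by simpa using hm)
  · exact ⟨k, m, hm, rfl⟩

lemma two_mul_totient_le_of_even {n : ℕ} (hn : Even n) : 2 * φ n ≤ n := by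
  rcases eq_or_ne n 0 with rfl | h0
  · simp
  obtain ⟨k, m, hm, rfl⟩ := exists_eq_two_pow_succ_mul_odd_of_even hn h0
  rw [totient_two_pow_succ_mul_of_odd hm, ← mul_assoc, ← pow_succ']
  exact Nat.mul_le_mul_left _ (Nat.totient_le m)

lemma two_pow_H_le_of_even {n : ℕ} (hn : Even n) (h0 : n ≠ 0) : 2 ^ H n ≤ n := by
  induction n using Nat.strong_induction_on with
  | _ n ih =>
  obtain rfl | h2 : n = 2 ∨ 2 < n := by obtain ⟨k, rfl⟩ := hn; omega
  · simp [H_two]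
  have hφ := ih (φ n) (Nat.totient_lt n (by omega)) (Nat.totient_even h2)
    (Nat.totient_pos.mpr (by omega)).ne'
  have := two_mul_totient_le_of_even hn
  rw [H_eq_H_totient_add_one h2.le, pow_succ]
  omega

lemma two_pow_H_le {n : ℕ} (hn : n ≠ 0) : 2 ^ H n ≤ 2 * n := by
  obtain rfl | rfl | h2 : n = 1 ∨ n = 2 ∨ 2 < n := by omega
  · simp [H_one]
  · simp [H_two]
  · have := two_pow_H_le_of_even (Nat.totient_even h2) (Nat.totient_pos.mpr (by omega)).ne'
    have := Nat.totient_le n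
    rw [H_eq_H_totient_add_one h2.le, pow_succ]
    omega

namespace Pillai

noncomputable def weight (n : ℕ) : ℝ := n * (3 / 2) ^ padicValNat 2 n

lemma weight_nonneg (n : ℕ) : 0 ≤ weight n := by
  unfold weight; positivity

lemma weight_mul {a b : ℕ} (ha : a ≠ 0) (hb : b ≠ 0) :
    weight (a * b) = weight a * weight b := by
  simp only [weight, padicValNat.mul ha hb, pow_add, Nat.cast_mul]
  ring

lemma weight_of_odd {n : ℕ} (hn : Odd n) : weight n = n := by
  simp [weight, padicValNat.eq_zero_of_not_dvd hn.not_two_dvd_nat]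

lemma weight_two_pow (k : ℕ) : weight (2 ^ k) = 3 ^ k := by
  rw [weight, padicValNat.prime_pow, Nat.cast_pow, ← mul_pow]
  norm_num

lemma three_halves_mul_le_weight_of_even {n : ℕ} (hn : Even n) :
    3 / 2 * (n : ℝ) ≤ weight n := by
  rcases eq_or_ne n 0 with rfl | h0
  · simp [weight]
  rw [weight, mul_comm]
  gcongr
  exact le_self_pow₀ (by norm_num)
    (Nat.one_le_iff_ne_zero.mp (one_le_padicValNat_of_dvd h0 hn.two_dvd))

lemma succ_le_weight_of_even {n : ℕ} (hn : Even n) (h0 : n ≠ 0) :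
    (n : ℝ) + 1 ≤ weight n := by
  obtain ⟨k, m, hm, rfl⟩ := exists_eq_two_pow_succ_mul_odd_of_even hn h0
  rw [weight_mul (by positivity) hm.pos.ne', weight_two_pow, weight_of_odd hm]
  have : 2 ^ (k + 1) * m < 3 ^ (k + 1) * m :=
    Nat.mul_lt_mul_of_pos_right (Nat.pow_lt_pow_left (by norm_num) k.succ_ne_zero) hm.pos
  exact_mod_cast this

lemma le_weight_totient_of_odd {n : ℕ} (hn : Odd n) : (n : ℝ) ≤ weight (φ n) := by
  induction n using Nat.recOnPosPrimePosCoprime with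
  | zero => simp at hn
  | one => simp [weight]
  | prime_pow p k hp hk =>
    obtain ⟨k, rfl⟩ : ∃ j, k = j + 1 := ⟨k - 1, by omega⟩
    have hpo : Odd p := (Nat.odd_pow_iff k.succ_ne_zero).mp hn
    have hp1 : p - 1 ≠ 0 := by have := hp.two_le; omega
    rw [Nat.totient_prime_pow_succ hp, weight_mul (pow_ne_zero _ hp.ne_zero) hp1,
      weight_of_odd hpo.pow, pow_succ, Nat.cast_mul]
    gcongr
    have := succ_le_weight_of_even (Nat.Odd.sub_odd hpo odd_one) hp1
    rwa [Nat.cast_sub hp.one_le, Nat.cast_one, sub_add_cancel] at this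
  | coprime a b ha hb hab iha ihb =>
    obtain ⟨hao, hbo⟩ := Nat.odd_mul.mp hn
    rw [Nat.totient_mul hab, weight_mul (Nat.totient_pos.mpr (by omega)).ne'
      (Nat.totient_pos.mpr (by omega)).ne', Nat.cast_mul]
    exact mul_le_mul (iha hao) (ihb hbo) (by positivity) (weight_nonneg _)

lemma weight_le_three_mul_weight_totient (n : ℕ) : weight n ≤ 3 * weight (φ n) := by
  rcases Nat.even_or_odd n with hn | hn
  · rcases eq_or_ne n 0 with rfl | h0
    · simp [weight]
    obtain ⟨k, m, hm, rfl⟩ := exists_eq_two_pow_succ_mul_odd_of_even hn h0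
    rw [totient_two_pow_succ_mul_of_odd hm, weight_mul (by positivity) hm.pos.ne',
      weight_mul (by positivity) (Nat.totient_pos.mpr hm.pos).ne', weight_two_pow, weight_two_pow,
      weight_of_odd hm, pow_succ, mul_comm _ (3 : ℝ), mul_assoc]
    gcongr
    exact le_weight_totient_of_odd hm
  · rw [weight_of_odd hn]
    exact (le_weight_totient_of_odd hn).trans
      (le_mul_of_one_le_left (weight_nonneg _) (by norm_num))

lemma weight_le_three_pow_H {n : ℕ} (hn : 2 ≤ n) : weight n ≤ 3 ^ H n := by
  induction n using Nat.strong_induction_on with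
  | _ n ih =>
  rcases hn.eq_or_lt with rfl | h2
  · simpa [H_two] using (weight_two_pow 1).le
  rw [H_eq_H_totient_add_one hn, pow_succ']
  refine (weight_le_three_mul_weight_totient n).trans ?_
  gcongr
  exact ih _ (Nat.totient_lt n hn) (two_le_totient h2)

lemma three_halves_mul_le_three_pow_H {n : ℕ} (hn : 2 ≤ n) : 3 / 2 * (n : ℝ) ≤ 3 ^ H n := by
  rcases Nat.even_or_odd n with he | ho
  · exact (three_halves_mul_le_weight_of_even he).trans (weight_le_three_pow_H hn)
  have h2 : 2 < n := by obtain ⟨k, rfl⟩ := ho; omega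
  calc 3 / 2 * (n : ℝ) ≤ 3 * n := by linarith
    _ ≤ 3 * weight (φ n) := by gcongr; exact le_weight_totient_of_odd ho
    _ ≤ 3 * 3 ^ H (φ n) := by gcongr; exact weight_le_three_pow_H (two_le_totient h2)
    _ = 3 ^ H n := by rw [H_eq_H_totient_add_one hn, pow_succ']

end Pillai

lemma log_div_log_add_one_le_of_mul_le_pow {b x : ℝ} {k : ℕ} (hb : 1 < b) (hx : 0 < x)
    (h : b * x ≤ b ^ k) : Real.log x / Real.log b + 1 ≤ k := by
  rw [Real.log_div_log, ← Real.logb_self_eq_one hb, ← Real.logb_mul hx.ne' (by positivity),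
    Real.logb_le_iff_le_rpow hb (by positivity), Real.rpow_natCast, mul_comm]
  exact h

lemma le_log_div_log_add_one_of_pow_le_mul {b x : ℝ} {k : ℕ} (hb : 1 < b) (hx : 0 < x)
    (h : b ^ k ≤ b * x) : (k : ℝ) ≤ Real.log x / Real.log b + 1 := by
  rw [Real.log_div_log, ← Real.logb_self_eq_one hb, ← Real.logb_mul hx.ne' (by positivity),
    Real.le_logb_iff_rpow_le hb (by positivity), Real.rpow_natCast, mul_comm]
  exact h

theorem pillai_inequalities (n : ℕ) (hn : 2 ≤ n) :
    Real.log ((n : ℝ) / 2) / Real.log 3 + 1 ≤ (H n : ℝ) ∧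
    (H n : ℝ) ≤ Real.log (n : ℝ) / Real.log 2 + 1 := by
  constructor
  · refine log_div_log_add_one_le_of_mul_le_pow (by norm_num) (by positivity) ?_
    linarith [Pillai.three_halves_mul_le_three_pow_H hn]
  · refine le_log_div_log_add_one_of_pow_le_mul (by norm_num) (by positivity) ?_
    exact_mod_cast two_pow_H_le (by omega)
end

section
/- There exist real constants a > 0, A₁ > 0 and A₂ > 0 such that for every natural number n > 2, a·S(n) ≤ p_n ≤ A₁·S(n) + A₂·n, where p_n denotes the n-th prime number. -/
open Finset Nat

/-- Shapiro's class of a prime; the last clause is `shapiroClass (p + 2)` written out. -/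
def shapiroWeight : ℕ → ℕ
  | 0 => 0
  | 1 => 0
  | 2 => 1
  | p + 3 => ∑ q ∈ (p + 2).primeFactors.attach,
      (p + 2).factorization q.1 * shapiroWeight q.1
  decreasing_by exact lt_of_le_of_lt (le_of_mem_primeFactors q.2) (by omega)

def shapiroClass (n : ℕ) : ℕ := ∑ p ∈ n.primeFactors, n.factorization p * shapiroWeight p

lemma shapiroWeight_two : shapiroWeight 2 = 1 := by rw [shapiroWeight]

lemma shapiroWeight_of_three_le {p : ℕ} (hp : 3 ≤ p) :
    shapiroWeight p = shapiroClass (p - 1) := by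
  obtain ⟨q, rfl⟩ : ∃ q, p = q + 3 := ⟨p - 3, by omega⟩
  show shapiroWeight (q + 3) = shapiroClass (q + 2)
  rw [shapiroWeight, shapiroClass,
    ← sum_attach _ fun p => (q + 2).factorization p * shapiroWeight p]

lemma shapiroClass_eq_sum (n : ℕ) :
    shapiroClass n = n.factorization.sum fun p k => k * shapiroWeight p := rfl

lemma shapiroClass_zero : shapiroClass 0 = 0 := by simp [shapiroClass]

lemma shapiroClass_one : shapiroClass 1 = 0 := by simp [shapiroClass]

lemma shapiroClass_mul {a b : ℕ} (ha : a ≠ 0) (hb : b ≠ 0) :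
    shapiroClass (a * b) = shapiroClass a + shapiroClass b := by
  simp only [shapiroClass_eq_sum, Nat.factorization_mul ha hb]
  exact Finsupp.sum_add_index' (by simp) fun _ _ _ => add_mul _ _ _

lemma shapiroClass_prime {p : ℕ} (hp : p.Prime) : shapiroClass p = shapiroWeight p := by
  simp [shapiroClass, hp.primeFactors, hp.factorization_self]

lemma shapiroClass_two : shapiroClass 2 = 1 := by
  rw [shapiroClass_prime prime_two, shapiroWeight_two]

lemma shapiroClass_pow {p : ℕ} (hp : p ≠ 0) (k : ℕ) :
    shapiroClass (p ^ k) = k * shapiroClass p := by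
  induction k with
  | zero => simp [shapiroClass_one]
  | succ k ih => rw [pow_succ, shapiroClass_mul (pow_ne_zero _ hp) hp, ih]; ring

lemma shapiroClass_prod {ι : Type*} (s : Finset ι) {f : ι → ℕ} (hf : ∀ i ∈ s, f i ≠ 0) :
    shapiroClass (∏ i ∈ s, f i) = ∑ i ∈ s, shapiroClass (f i) := by
  induction s using Finset.cons_induction with
  | empty => simp [shapiroClass_one]
  | cons a s ha ih =>
    rw [prod_cons, sum_cons, shapiroClass_mul (hf a (mem_cons_self a s))
      (prod_ne_zero_iff.mpr fun i hi => hf i (mem_cons_of_mem hi)),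
      ih fun i hi => hf i (mem_cons_of_mem hi)]

lemma shapiroClass_sub_one_add_ite {p : ℕ} (hp : p.Prime) :
    shapiroClass (p - 1) + (if p = 2 then 1 else 0) = shapiroWeight p := by
  rcases hp.eq_two_or_odd' with rfl | hodd
  · simp [shapiroClass_one, shapiroWeight_two]
  · have h3 : 3 ≤ p := by have := hp.two_le; rcases hodd with ⟨k, rfl⟩; omega
    rw [shapiroWeight_of_three_le h3, if_neg (by omega), add_zero]

lemma shapiroClass_totient_prime_pow_add_ite {p k : ℕ} (hp : p.Prime) (hk : k ≠ 0) :
    shapiroClass (p ^ (k - 1) * (p - 1)) + (if p = 2 then 1 else 0) = k * shapiroWeight p := by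
  have hp1 : p - 1 ≠ 0 := by have := hp.two_le; omega
  rw [shapiroClass_mul (pow_ne_zero _ hp.ne_zero) hp1, shapiroClass_pow hp.ne_zero,
    shapiroClass_prime hp, add_assoc, shapiroClass_sub_one_add_ite hp]
  obtain ⟨j, rfl⟩ : ∃ j, k = j + 1 := ⟨k - 1, by omega⟩
  rw [add_tsub_cancel_right]
  ring

lemma shapiroClass_totient_add_ite {n : ℕ} (hn : n ≠ 0) :
    shapiroClass (φ n) + (if 2 ∣ n then 1 else 0) = shapiroClass n := by
  have hfac : ∀ p ∈ n.primeFactors, p ^ (n.factorization p - 1) * (p - 1) ≠ 0 := fun p hp =>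
    have := (prime_of_mem_primeFactors hp).two_le
    mul_ne_zero (pow_ne_zero _ (by omega)) (by omega)
  have h2 : (2 ∣ n) ↔ 2 ∈ n.primeFactors := by simp [mem_primeFactors_of_ne_zero hn, prime_two]
  rw [totient_eq_prod_factorization hn, prod_factorization_eq_prod_primeFactors,
    shapiroClass_prod _ hfac, if_congr h2 rfl rfl, ← sum_ite_eq' n.primeFactors 2 fun _ => 1,
    ← sum_add_distrib, shapiroClass]
  refine sum_congr rfl fun p hp => ?_
  exact shapiroClass_totient_prime_pow_add_ite (prime_of_mem_primeFactors hp)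
    (Finsupp.mem_support_iff.mp (by rwa [support_factorization]))

lemma pow_shapiroClass (b n : ℕ) :
    b ^ shapiroClass n = ∏ p ∈ n.primeFactors, (b ^ shapiroWeight p) ^ n.factorization p := by
  rw [shapiroClass, ← prod_pow_eq_pow_sum]
  exact prod_congr rfl fun p _ => by rw [← pow_mul, mul_comm]

lemma pow_shapiroClass_le {b n : ℕ} (hn : n ≠ 0)
    (h : ∀ p ∈ n.primeFactors, b ^ shapiroWeight p ≤ p) : b ^ shapiroClass n ≤ n := by
  conv_rhs => rw [← prod_factorization_pow_eq_self hn, prod_factorization_eq_prod_primeFactors]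
  rw [pow_shapiroClass]
  exact prod_le_prod' fun p hp => Nat.pow_le_pow_left (h p hp) _

lemma le_pow_shapiroClass {b n : ℕ} (h : ∀ p ∈ n.primeFactors, p ≤ b ^ shapiroWeight p) :
    n ≤ b ^ shapiroClass n := by
  rcases eq_or_ne n 0 with rfl | hn
  · exact Nat.zero_le _
  conv_lhs => rw [← prod_factorization_pow_eq_self hn, prod_factorization_eq_prod_primeFactors]
  rw [pow_shapiroClass]
  exact prod_le_prod' fun p hp => Nat.pow_le_pow_left (h p hp) _

theorem two_pow_shapiroClass_le {n : ℕ} (hn : n ≠ 0) : 2 ^ shapiroClass n ≤ n := by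
  induction n using Nat.strong_induction_on with
  | _ n ih =>
  refine pow_shapiroClass_le hn fun p hp => ?_
  have hpp := prime_of_mem_primeFactors hp
  have hpn := le_of_mem_primeFactors hp
  rcases hpp.eq_two_or_odd' with rfl | hodd
  · simp [shapiroWeight_two]
  · have h3 : 3 ≤ p := by have := hpp.two_le; rcases hodd with ⟨k, rfl⟩; omega
    rw [shapiroWeight_of_three_le h3]
    exact (ih (p - 1) (by omega) (by omega)).trans (sub_le p 1)

theorem le_three_pow_shapiroClass (n : ℕ) : n ≤ 3 ^ shapiroClass n := by
  induction n using Nat.strong_induction_on with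
  | _ n ih =>
  refine le_pow_shapiroClass fun p hp => ?_
  have hpp := prime_of_mem_primeFactors hp
  have hpn := le_of_mem_primeFactors hp
  rcases hpp.eq_two_or_odd' with rfl | ⟨m, rfl⟩
  · simp [shapiroWeight_two]
  · have hm : m ≠ 0 := by rintro rfl; exact not_prime_one hpp
    rw [shapiroWeight_of_three_le (by omega), add_tsub_cancel_right,
      shapiroClass_mul two_ne_zero hm, shapiroClass_two, pow_add]
    have := ih m (by omega)
    omega

lemma H_of_two_le {n : ℕ} (h : 2 ≤ n) : H n = H (φ n) + 1 := by
  obtain ⟨m, rfl⟩ : ∃ m, n = m + 2 := ⟨n - 2, by omega⟩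
  rw [H]

theorem H_eq_shapiroClass_of_even {n : ℕ} (he : Even n) (hn : n ≠ 0) :
    H n = shapiroClass n := by
  induction n using Nat.strong_induction_on with
  | _ n ih =>
  rcases eq_or_ne n 2 with rfl | hn2
  · rw [H_of_two_le le_rfl, totient_two, shapiroClass_two, H]
  have h2 : 2 < n := by rcases he with ⟨k, rfl⟩; omega
  have := shapiroClass_totient_add_ite hn
  rw [if_pos (even_iff_two_dvd.mp he)] at this
  rw [H_of_two_le h2.le, ih _ (totient_lt n (by omega)) (totient_even h2)
    (totient_pos.mpr (by omega)).ne', this]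

lemma H_eq_shapiroClass_totient_add_one {n : ℕ} (h : 3 ≤ n) :
    H n = shapiroClass (φ n) + 1 := by
  rw [H_of_two_le (by omega), H_eq_shapiroClass_of_even (totient_even h)
    (totient_pos.mpr (by omega)).ne']

theorem shapiroClass_le_H (n : ℕ) : shapiroClass n ≤ H n := by
  rcases lt_or_ge n 3 with h | h
  · interval_cases n <;> simp [shapiroClass_zero, shapiroClass_one, shapiroClass_two, H]
  · have := shapiroClass_totient_add_ite (n := n) (by omega)
    split_ifs at this <;> rw [H_eq_shapiroClass_totient_add_one h] <;> omega

theorem H_le_shapiroClass_add_one (n : ℕ) : H n ≤ shapiroClass n + 1 := by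
  rcases lt_or_ge n 3 with h | h
  · interval_cases n <;> simp [shapiroClass_zero, shapiroClass_one, shapiroClass_two, H]
  · have := shapiroClass_totient_add_ite (n := n) (by omega)
    rw [H_eq_shapiroClass_totient_add_one h]
    omega

theorem H_le_log_add_one (n : ℕ) : H n ≤ Nat.log 2 n + 1 := by
  rcases eq_or_ne n 0 with rfl | hn
  · simp [H]
  have : 2 ^ H n < 2 ^ (Nat.log 2 n + 2) := calc
    2 ^ H n ≤ 2 ^ (shapiroClass n + 1) :=
      Nat.pow_le_pow_right two_pos (H_le_shapiroClass_add_one n)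
    _ ≤ 2 * n := by rw [pow_succ]; have := two_pow_shapiroClass_le hn; omega
    _ < 2 ^ (Nat.log 2 n + 2) := by
      rw [pow_succ]; have := lt_pow_succ_log_self one_lt_two n; omega
  have := (Nat.pow_lt_pow_iff_right (by norm_num)).mp this
  omega

theorem log_le_two_mul_H (n : ℕ) : Nat.log 2 n ≤ 2 * H n := calc
  Nat.log 2 n ≤ Nat.log 2 (2 ^ (2 * H n)) := by
    refine log_mono_right ((le_three_pow_shapiroClass n).trans ?_)
    rw [pow_mul]
    exact (Nat.pow_le_pow_left (by norm_num) _).trans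
      (Nat.pow_le_pow_right (by norm_num) (shapiroClass_le_H n))
  _ = 2 * H n := Nat.log_pow one_lt_two _

theorem mul_log_le_two_mul_sum_log (n : ℕ) :
    n * Nat.log 2 n ≤ 2 * ∑ k ∈ Icc 1 n, Nat.log 2 k + 2 * n := by
  have htop : ∀ k ∈ Icc (n / 2 + 1) n, Nat.log 2 n ≤ Nat.log 2 k + 1 := fun k hk => by
    rw [mem_Icc] at hk
    rw [← log_mul_base one_lt_two (by omega)]
    exact log_mono_right (by omega)
  calc n * Nat.log 2 n ≤ 2 * ((n - n / 2) * Nat.log 2 n) := by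
        rw [← mul_assoc]; exact Nat.mul_le_mul_right _ (show n ≤ 2 * (n - n / 2) by omega)
    _ = 2 * ∑ _k ∈ Icc (n / 2 + 1) n, Nat.log 2 n := by
        rw [sum_const, card_Icc, smul_eq_mul, Nat.add_sub_add_right]
    _ ≤ 2 * ∑ k ∈ Icc (n / 2 + 1) n, (Nat.log 2 k + 1) := by gcongr with k hk; exact htop k hk
    _ ≤ 2 * ∑ k ∈ Icc 1 n, (Nat.log 2 k + 1) := by
        gcongr
        omega
    _ = 2 * ∑ k ∈ Icc 1 n, Nat.log 2 k + 2 * n := by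
        rw [sum_add_distrib, sum_const, card_Icc, smul_eq_mul]; ring_nf; omega

theorem S_le_mul_log_add_one (n : ℕ) : S n ≤ n * (Nat.log 2 n + 1) := calc
  S n ≤ ∑ _k ∈ Icc 1 n, (Nat.log 2 n + 1) := sum_le_sum fun k hk =>
    (H_le_log_add_one k).trans (Nat.add_le_add_right (log_mono_right (mem_Icc.mp hk).2) 1)
  _ = n * (Nat.log 2 n + 1) := by simp

theorem sum_log_le_two_mul_S (n : ℕ) : ∑ k ∈ Icc 1 n, Nat.log 2 k ≤ 2 * S n := by
  rw [S, mul_sum]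
  exact sum_le_sum fun k _ => log_le_two_mul_H k

theorem two_pow_le_pow_primeCounting (m : ℕ) : 2 ^ m ≤ (m + 1) ^ (primeCounting m + 1) := calc
  2 ^ m ≤ (m + 1) * lcmUpto m := Chebyshev.two_pow_le_mul_lcmUpto m
  _ ≤ (m + 1) * (m + 1) ^ primeCounting m := by
    rw [lcmUpto_eq_prod_pow_log, ← primesLE_card_eq_primeCounting]
    gcongr
    refine prod_le_pow_card _ _ _ fun p hp => ?_
    have := le_of_mem_primesLE hp
    have := two_le_of_mem_primesLE hp
    exact (pow_log_le_self p (by omega)).trans (le_succ m)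
  _ = (m + 1) ^ (primeCounting m + 1) := by rw [_root_.pow_succ']

theorem nth_prime_le (n : ℕ) :
    nth Nat.Prime n ≤ 4 * (n + 1) * (Nat.log 2 (n + 1) + 1) := by
  set L := Nat.log 2 (n + 1)
  set m := 4 * (n + 1) * (L + 1)
  by_contra! hm
  have hπ : primeCounting m ≤ n := by
    rw [primeCounting, ← primeCounting'_nth_eq n]
    exact monotone_primeCounting' hm
  have hn : n + 1 ≤ 2 ^ (L + 1) := (lt_pow_succ_log_self one_lt_two _).le
  have hL : L + 1 ≤ 2 ^ L := Nat.lt_two_pow_self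
  have hm4 : m + 1 < 2 ^ (2 * L + 4) := by
    have : m ≤ 2 ^ (2 * L + 3) := calc
      m ≤ 4 * 2 ^ (L + 1) * 2 ^ L := by simp only [m]; gcongr
      _ = 2 ^ (2 * L + 3) := by ring
    rw [pow_succ]
    have := Nat.one_lt_two_pow (n := 2 * L + 3) (by omega)
    omega
  have : 2 ^ m < 2 ^ m := calc
    2 ^ m ≤ (m + 1) ^ (primeCounting m + 1) := two_pow_le_pow_primeCounting m
    _ ≤ (m + 1) ^ (n + 1) := Nat.pow_le_pow_right (by omega) (by omega)
    _ < (2 ^ (2 * L + 4)) ^ (n + 1) := Nat.pow_lt_pow_left hm4 (by omega)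
    _ = 2 ^ ((n + 1) * (2 * L + 4)) := by rw [← pow_mul, mul_comm]
    _ ≤ 2 ^ m := Nat.pow_le_pow_right two_pos (by simp only [m]; nlinarith)
  exact lt_irrefl _ this

theorem sum_log_le_two_mul_nth_prime (n : ℕ) :
    ∑ k ∈ Icc 1 n, Nat.log 2 k ≤ 2 * nth Nat.Prime (n - 1) := by
  have hinf := infinite_setOfPred_prime
  have hinj : Set.InjOn (fun k => nth Nat.Prime (k - 1)) (Icc 1 n) := fun a ha b hb hab => by
    simp only [coe_Icc, Set.mem_Icc] at ha hb
    have := (nth_strictMono hinf).injective hab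
    omega
  refine (Nat.pow_le_pow_iff_right (le_refl 2)).mp ?_
  calc 2 ^ ∑ k ∈ Icc 1 n, Nat.log 2 k = ∏ k ∈ Icc 1 n, 2 ^ Nat.log 2 k :=
        (prod_pow_eq_pow_sum ..).symm
    _ ≤ ∏ k ∈ Icc 1 n, nth Nat.Prime (k - 1) := by
        gcongr with k hk
        have := add_two_le_nth_prime (k - 1)
        rw [mem_Icc] at hk
        exact (pow_log_le_self 2 (by omega)).trans (by omega)
    _ = ∏ p ∈ (Icc 1 n).image fun k => nth Nat.Prime (k - 1), p :=
        (prod_image (f := fun p => p) hinj).symm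
    _ ≤ primorial (nth Nat.Prime (n - 1)) := by
        rw [primorial_eq_prod_primesLE]
        refine prod_le_prod_of_subset_of_one_le' ?_
          fun p hp _ => (prime_of_mem_primesLE hp).one_le
        intro p hp
        simp only [mem_image, mem_Icc] at hp
        obtain ⟨k, hk, rfl⟩ := hp
        exact mem_primesLE.mpr ⟨(nth_le_nth hinf).mpr (by omega), nth_mem_of_infinite hinf _⟩
    _ ≤ 4 ^ nth Nat.Prime (n - 1) := primorial_le_four_pow _
    _ = 2 ^ (2 * nth Nat.Prime (n - 1)) := by rw [pow_mul]; norm_num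

theorem chebyshev_type_nth_prime :
    ∃ a A₁ A₂ : ℝ, 0 < a ∧ 0 < A₁ ∧ 0 < A₂ ∧ ∀ n : ℕ, 2 < n →
      a * (S n : ℝ) ≤ (Nat.nth Nat.Prime (n - 1) : ℝ) ∧
      (Nat.nth Nat.Prime (n - 1) : ℝ) ≤ A₁ * (S n : ℝ) + A₂ * (n : ℝ) := by
  refine ⟨1 / 7, 16, 12, by norm_num, by norm_num, by norm_num, fun n hn => ?_⟩
  obtain ⟨m, rfl⟩ : ∃ m, n = m + 1 := ⟨n - 1, by omega⟩
  have hS := S_le_mul_log_add_one (m + 1)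
  have hlog := mul_log_le_two_mul_sum_log (m + 1)
  have hlogS := sum_log_le_two_mul_S (m + 1)
  have hlogP := sum_log_le_two_mul_nth_prime (m + 1)
  have hP := nth_prime_le m
  have hP2 := add_two_le_nth_prime m
  rw [add_tsub_cancel_right] at hlogP ⊢
  have hlower : S (m + 1) ≤ 7 * nth Nat.Prime m := by linarith
  have hupper : nth Nat.Prime m ≤ 16 * S (m + 1) + 12 * (m + 1) := by linarith
  constructor
  · have : (S (m + 1) : ℝ) ≤ 7 * nth Nat.Prime m := by exact_mod_cast hlower
    linarith
  · exact_mod_cast hupper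
end
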